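/- The labeling λ_• is injective on maximal chains of every interval of the pointed partition poset Π_n^•: for any π ∈ Π_n^•, a saturated chain starting at π is uniquely determined by its sequence of λ_•-labels; in particular, within any interval of Π_n^•, distinct maximal chains have distinct label words. -/

import Mathlib

open Finset

open scoped BigOperators Classical

/-! ## Generic machinery for edge labelings of posets presented by cover relations -/

section Chains

variable {α : Type*} {L : Type*}

/-- The word of labels read along a list of poset elements. -/
def wordOf (lab : α → α → L) : List α → List L
  | x :: y :: rest => lab x y :: wordOf lab (y :: rest)
  | _ => []

/-- `c` is a saturated chain from `x` to `y` with respect to the cover relation `cov`;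
in a graded poset these are exactly the maximal chains of the interval `[x, y]`. -/
def IsSatChain (cov : α → α → Prop) (x y : α) (c : List α) : Prop :=
  c.Chain' cov ∧ c.head? = some x ∧ c.getLast? = some y

/-- A word of labels is increasing if consecutive labels strictly increase. -/
def IncWord (lt : L → L → Prop) (w : List L) : Prop := w.Chain' lt

/-- A word of labels is ascent-free if no consecutive pair of labels strictly increases. -/
def AscFree (lt : L → L → Prop) (w : List L) : Prop := w.Chain' fun a b => ¬ lt a b

/-- The partial order generated by a cover relation. -/
def leOf (cov : α → α → Prop) : α → α → Prop := Relation.ReflTransGen cov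

/-- The strict order generated by a cover relation. -/
def ltOf (cov : α → α → Prop) (a b : α) : Prop := leOf cov a b ∧ a ≠ b

/-- An ER-labeling: every closed interval has a unique increasing maximal chain. -/
def IsERLabeling (cov : α → α → Prop) (lab : α → α → L) (lt : L → L → Prop) : Prop :=
  ∀ x y, leOf cov x y → ∃! c, IsSatChain cov x y c ∧ IncWord lt (wordOf lab c)

/-- The rank two switching property: in every rank-two interval whose increasing chain
has word of labels `ab`, there is a unique chain with word of labels `ba`. -/
def RankTwoSwitch (cov : α → α → Prop) (lab : α → α → L) (lt : L → L → Prop) : Prop :=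
  ∀ x y c a b, IsSatChain cov x y c → IncWord lt (wordOf lab c) → wordOf lab c = [a, b] →
    ∃! c', IsSatChain cov x y c' ∧ wordOf lab c' = [b, a]

/-- In every interval, distinct ascent-free maximal chains have distinct label words. -/
def AscFreeInj (cov : α → α → Prop) (lab : α → α → L) (lt : L → L → Prop) : Prop :=
  ∀ x y c c', IsSatChain cov x y c → IsSatChain cov x y c' →
    AscFree lt (wordOf lab c) → AscFree lt (wordOf lab c') →
    wordOf lab c = wordOf lab c' → c = c'

/-- An EW-labeling. -/
def IsEWLabeling (cov : α → α → Prop) (lab : α → α → L) (lt : L → L → Prop) : Prop :=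
  IsERLabeling cov lab lt ∧ RankTwoSwitch cov lab lt ∧ AscFreeInj cov lab lt

/-- An EL-labeling: every closed interval has a unique increasing maximal chain,
which lexicographically precedes every other maximal chain of the interval. -/
def IsELLabeling (cov : α → α → Prop) (lab : α → α → L) (lt : L → L → Prop) : Prop :=
  ∀ x y, leOf cov x y →
    ∃ c, (IsSatChain cov x y c ∧ IncWord lt (wordOf lab c)) ∧
      ∀ c', IsSatChain cov x y c' → c' ≠ c →
        ¬ IncWord lt (wordOf lab c') ∧ List.Lex lt (wordOf lab c) (wordOf lab c')

end Chains

/-! ## Möbius functions and Whitney numbers -/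

section Whitney

variable {α : Type*} {β : Type*}

/-- Auxiliary Möbius function computed with fuel; for an element of rank `k` of a
graded poset, fuel `k` computes the one-variable Möbius function `μ(0̂, ·)`. -/
noncomputable def muAux (ltr : α → α → Prop) (bot : α) : ℕ → α → ℤ
  | 0, x => if x = bot then 1 else 0
  | k + 1, x => if x = bot then 1 else - ∑ᶠ (y : α) (_ : ltr y x), muAux ltr bot k y

/-- The one-variable Möbius function `μ(0̂, x)` of a graded poset presented by its
cover relation `cov`, minimum `bot` and rank function `rk`. -/
noncomputable def muBot (cov : α → α → Prop) (bot : α) (rk : α → ℕ) (x : α) : ℤ :=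
  muAux (ltOf cov) bot (rk x) x

/-- The `k`-th Whitney number of the first kind. -/
noncomputable def whitney1 (cov : α → α → Prop) (bot : α) (rk : α → ℕ) (k : ℕ) : ℤ :=
  ∑ᶠ (x : α) (_ : rk x = k), muBot cov bot rk x

/-- The `k`-th Whitney number of the second kind. -/
noncomputable def whitney2 (rk : α → ℕ) (k : ℕ) : ℕ :=
  Nat.card {x : α // rk x = k}

/-- Two graded posets are Whitney duals if their Whitney numbers of the first and second
kind are swapped (up to sign). -/
def IsWhitneyDual (covP : α → α → Prop) (botP : α) (rkP : α → ℕ)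
    (covQ : β → β → Prop) (botQ : β) (rkQ : β → ℕ) : Prop :=
  ∀ k, (whitney1 covP botP rkP k).natAbs = whitney2 rkQ k ∧
       (whitney1 covQ botQ rkQ k).natAbs = whitney2 rkP k

/-- Two graded posets are Whitney twins if they have the same Whitney numbers of the first
and of the second kind. -/
def IsWhitneyTwin (covP : α → α → Prop) (botP : α) (rkP : α → ℕ)
    (covQ : β → β → Prop) (botQ : β) (rkQ : β → ℕ) : Prop :=
  ∀ k, whitney1 covP botP rkP k = whitney1 covQ botQ rkQ k ∧ whitney2 rkP k = whitney2 rkQ k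

/-- `(cov, bot, rk)` presents a graded poset with minimum `bot`. -/
def IsGradedPoset (cov : α → α → Prop) (bot : α) (rk : α → ℕ) : Prop :=
  (∀ x, leOf cov bot x) ∧ rk bot = 0 ∧ ∀ x y, cov x y → rk y = rk x + 1

/-- A graded poset has a Whitney dual. -/
def HasWhitneyDual {γ : Type} (cov : γ → γ → Prop) (bot : γ) (rk : γ → ℕ) : Prop :=
  ∃ (β : Type) (_ : Finite β) (covQ : β → β → Prop) (botQ : β) (rkQ : β → ℕ),
    IsGradedPoset covQ botQ rkQ ∧ IsWhitneyDual cov bot rk covQ botQ rkQ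

/-- Isomorphism of the posets generated by two cover relations. -/
def CovPosetIso (covP : α → α → Prop) (covQ : β → β → Prop) : Prop :=
  ∃ e : α ≃ β, ∀ x y, leOf covP x y ↔ leOf covQ (e x) (e y)

end Whitney

/-! ## The label posets `Λₙʷ` and `Λₙ•` (strict order relations)

Labels are triples `(a, b, u)` with `a < b` in `[n]` and `u ∈ {0,1}` (encoded as `Bool`). -/

/-- The strict order of `Λₙʷ = Γ₁ ⊕ ⋯ ⊕ Γ_{n-1}` where `Γ_a` carries the product order
`(a,b)ᵘ ≤ (a,c)ᵛ ↔ b ≤ c ∧ u ≤ v`. -/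
def ltLw (x y : ℕ × ℕ × Bool) : Prop :=
  x.1 < y.1 ∨ (x.1 = y.1 ∧ x.2.1 ≤ y.2.1 ∧ x.2.2 ≤ y.2.2 ∧ x.2 ≠ y.2)

/-- The strict order of `Λₙ• = A₁ ⊕ C₁ ⊕ ⋯ ⊕ A_{n-1} ⊕ C_{n-1}` where `A_a` is the
antichain of the `(a,b)⁰` and `C_a` is the chain of the `(a,b)¹` ordered by `b`. -/
def ltLp (x y : ℕ × ℕ × Bool) : Prop :=
  x.1 < y.1 ∨ (x.1 = y.1 ∧
    ((x.2.2 = false ∧ y.2.2 = true) ∨ (x.2.2 = true ∧ y.2.2 = true ∧ x.2.1 < y.2.1)))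

/-! ## Pointed and weighted partition posets -/

/-- The minimum of a finite set of naturals (`0` for the empty set). -/
def minB (B : Finset ℕ) : ℕ := B.min.untopD 0

/-- Pointed partitions of the ground set `A`: partitions of `A` into blocks, each block
carrying a distinguished (pointed) element.  A pointed block is a pair `(B, p)` with `p ∈ B`. -/
abbrev PPart (A : Finset ℕ) : Type :=
  {π : Finset (Finset ℕ × ℕ) //
    (∀ b ∈ π, b.2 ∈ b.1) ∧
    (∀ b ∈ π, ∀ b' ∈ π, b ≠ b' → Disjoint b.1 b'.1) ∧
    π.biUnion Prod.fst = A}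

/-- The cover relation of the pointed partition poset: merge two pointed blocks, the merged
block being pointed at the pointed element of one of the two. -/
def covPP {A : Finset ℕ} (π π' : PPart A) : Prop :=
  ∃ b1 ∈ π.1, ∃ b2 ∈ π.1, minB b1.1 < minB b2.1 ∧
    ∃ p : ℕ, (p = b1.2 ∨ p = b2.2) ∧
      π'.1 = insert (b1.1 ∪ b2.1, p) ((π.1.erase b1).erase b2)

/-- The labeling `λ•` (as a bare label map): the cover `u`-merging blocks `A, B` with
`min A < min B` gets the label `(min A, min B, u)`, where `u = 1` exactly when the merged
block is pointed at the pointed element of `A`. -/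
noncomputable def labPP {A : Finset ℕ} (π π' : PPart A) : ℕ × ℕ × Bool :=
  let olds := π.1 \ π'.1
  let mins := olds.image (fun b => minB b.1)
  (mins.min.untopD 0, mins.max.unbotD 0,
    if ∃ b ∈ olds, minB b.1 = mins.min.untopD 0 ∧ ∃ d ∈ π'.1 \ π.1, d.2 = b.2
      then true else false)

/-- The minimum of the pointed partition poset: all blocks are pointed singletons. -/
def botPP (A : Finset ℕ) : PPart A :=
  ⟨A.image fun i => ({i}, i), by
    refine ⟨?_, ?_, ?_⟩
    · intro b hb
      obtain ⟨i, -, rfl⟩ := Finset.mem_image.1 hb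
      exact Finset.mem_singleton_self i
    · intro b hb b' hb' hne
      obtain ⟨i, -, rfl⟩ := Finset.mem_image.1 hb
      obtain ⟨j, -, rfl⟩ := Finset.mem_image.1 hb'
      have hij : i ≠ j := fun h => hne (by rw [h])
      simp [Finset.disjoint_left, hij]
    · ext x
      simp⟩

/-- The rank function of the pointed partition poset. -/
def rkPP {A : Finset ℕ} (π : PPart A) : ℕ := A.card - π.1.card

/-- Weighted partitions of the ground set `A`: partitions of `A` into blocks, each block `B`
carrying a weight `v` with `0 ≤ v ≤ |B| - 1`. -/
abbrev WPart (A : Finset ℕ) : Type :=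
  {π : Finset (Finset ℕ × ℕ) //
    (∀ b ∈ π, b.2 < b.1.card) ∧
    (∀ b ∈ π, ∀ b' ∈ π, b ≠ b' → Disjoint b.1 b'.1) ∧
    π.biUnion Prod.fst = A}

/-- The cover relation of the weighted partition poset: merge blocks `A^v, B^w` into
`(A ∪ B)^(v+w+u)` for some `u ∈ {0,1}`. -/
def covWP {A : Finset ℕ} (π π' : WPart A) : Prop :=
  ∃ b1 ∈ π.1, ∃ b2 ∈ π.1, minB b1.1 < minB b2.1 ∧ ∃ u : Bool,
    π'.1 = insert (b1.1 ∪ b2.1, b1.2 + b2.2 + (if u then 1 else 0)) ((π.1.erase b1).erase b2)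

/-- The labeling `λ_w` (as a bare label map): the cover merging `A^v, B^w` with
`min A < min B` into `(A ∪ B)^(v+w+u)` gets the label `(min A, min B, u)`. -/
noncomputable def labWP {A : Finset ℕ} (π π' : WPart A) : ℕ × ℕ × Bool :=
  let olds := π.1 \ π'.1
  let mins := olds.image (fun b => minB b.1)
  (mins.min.untopD 0, mins.max.unbotD 0,
    if (π'.1 \ π.1).sum Prod.snd = olds.sum Prod.snd + 1 then true else false)

/-- The minimum of the weighted partition poset: all blocks singletons of weight `0`. -/
def botWP (A : Finset ℕ) : WPart A :=
  ⟨A.image fun i => ({i}, 0), by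
    refine ⟨?_, ?_, ?_⟩
    · intro b hb
      obtain ⟨i, -, rfl⟩ := Finset.mem_image.1 hb
      simp
    · intro b hb b' hb' hne
      obtain ⟨i, -, rfl⟩ := Finset.mem_image.1 hb
      obtain ⟨j, -, rfl⟩ := Finset.mem_image.1 hb'
      have hij : i ≠ j := fun h => hne (by rw [h])
      simp [Finset.disjoint_left, hij]
    · ext x
      simp⟩

/-- The rank function of the weighted partition poset. -/
def rkWP {A : Finset ℕ} (π : WPart A) : ℕ := A.card - π.1.card
/-! ## Bicolored binary trees and Lyndon forests -/

/-- Planar binary trees with `ℕ`-labeled leaves and `Bool`-colored internal vertices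
(`false` = color 0, `true` = color 1). -/
inductive BT : Type
  | leaf : ℕ → BT
  | node : Bool → BT → BT → BT
deriving DecidableEq

namespace BT

/-- The valency: the minimum leaf label of a tree. -/
def nu : BT → ℕ
  | leaf a => a
  | node _ l r => min l.nu r.nu

/-- The set of leaf labels of a tree. -/
def leaves : BT → Finset ℕ
  | leaf a => {a}
  | node _ l r => l.leaves ∪ r.leaves

/-- The number of internal vertices of a tree. -/
def internals : BT → ℕ
  | leaf _ => 0
  | node _ l r => l.internals + r.internals + 1

/-- A tree is normalized if its leaf labels are distinct and every internal vertex has the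
same valency as its left child. -/
def normalized : BT → Prop
  | leaf _ => True
  | node _ l r => l.normalized ∧ r.normalized ∧ Disjoint l.leaves r.leaves ∧ l.nu < r.nu

/-- The pointed Lyndon condition: at every internal vertex `v` with internal left child,
`color (L v) ≥ color v`, and if `color (L v) = color v = 1` then `v` is a Lyndon vertex,
i.e. `ν (R (L v)) > ν (R v)`. -/
def pLyn : BT → Prop
  | leaf _ => True
  | node c l r => l.pLyn ∧ r.pLyn ∧
      (match l with
       | leaf _ => True
       | node c' _ r' => c ≤ c' ∧ ((c' = c ∧ c = true) → r.nu < r'.nu))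

/-- The bicolored Lyndon condition: every internal vertex with internal left child is
Lyndon (`ν (R (L v)) > ν (R v)`) or satisfies `color (L v) > color v`. -/
def wLyn : BT → Prop
  | leaf _ => True
  | node c l r => l.wLyn ∧ r.wLyn ∧
      (match l with
       | leaf _ => True
       | node c' _ r' => r.nu < r'.nu ∨ c < c')

/-- The pointed element of a bicolored tree: a `1`-colored vertex keeps the point of its
left subtree and a `0`-colored vertex keeps the point of its right subtree. -/
def ppt : BT → ℕ
  | leaf a => a
  | node c l r => if c then l.ppt else r.ppt

end BT

/-- `u`-merging of two pointed Lyndon trees: create a new root of color `u` with the two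
trees as subtrees, then repeatedly slide the new vertex together with its right subtree
past its left child until the pointed Lyndon condition holds at the new vertex. -/
def mergeP (u : Bool) : BT → BT → BT
  | BT.leaf a, t2 => BT.node u (BT.leaf a) t2
  | BT.node c a b, t2 =>
      if u ≤ c ∧ ((c = true ∧ u = true) → t2.nu < b.nu)
      then BT.node u (BT.node c a b) t2
      else BT.node c (mergeP u a t2) b

/-- `u`-merging of two bicolored Lyndon trees: create a new root of color `u` with the two
trees as subtrees, then repeatedly slide the new vertex together with its right subtree
past its left child until the bicolored Lyndon condition holds at the new vertex. -/
def mergeW (u : Bool) : BT → BT → BT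
  | BT.leaf a, t2 => BT.node u (BT.leaf a) t2
  | BT.node c a b, t2 =>
      if t2.nu < b.nu ∨ u < c
      then BT.node u (BT.node c a b) t2
      else BT.node c (mergeW u a t2) b

/-- A valid forest on the ground set `[n]`, each tree normalized and satisfying `P`, the
trees having pairwise disjoint leaf sets which together cover `[n] = {1, …, n}`. -/
def ForestValid (n : ℕ) (P : BT → Prop) (F : Finset BT) : Prop :=
  (∀ t ∈ F, t.normalized ∧ P t) ∧
  (∀ t ∈ F, ∀ t' ∈ F, t ≠ t' → Disjoint t.leaves t'.leaves) ∧
  F.biUnion BT.leaves = Finset.Icc 1 n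

/-- The set of pointed Lyndon forests on `[n]`. -/
abbrev FLynP (n : ℕ) : Type := {F : Finset BT // ForestValid n BT.pLyn F}

/-- The set of bicolored Lyndon forests on `[n]`. -/
abbrev FLynW (n : ℕ) : Type := {F : Finset BT // ForestValid n BT.wLyn F}

/-- The cover relation on forests: `u`-merge two of the trees (the one with smaller minimum
leaf label going to the left). -/
def covForest (merge : Bool → BT → BT → BT) (F F' : Finset BT) : Prop :=
  ∃ t1 ∈ F, ∃ t2 ∈ F, t1.nu < t2.nu ∧ ∃ u : Bool,
    F' = insert (merge u t1 t2) ((F.erase t1).erase t2)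

/-- The cover relation of the poset of pointed Lyndon forests `FLyn_n^•`. -/
def covFP {n : ℕ} (F F' : FLynP n) : Prop := covForest mergeP F.1 F'.1

/-- The cover relation of the poset of bicolored Lyndon forests `FLyn_n^w`. -/
def covFW {n : ℕ} (F F' : FLynW n) : Prop := covForest mergeW F.1 F'.1

/-- The forest of `n` isolated leaves. -/
def botForest (n : ℕ) : Finset BT := (Finset.Icc 1 n).image BT.leaf

theorem botForest_valid (n : ℕ) (P : BT → Prop) (hP : ∀ a, P (BT.leaf a)) :
    ForestValid n P (botForest n) := by
  refine ⟨?_, ?_, ?_⟩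
  · intro t ht
    obtain ⟨i, -, rfl⟩ := Finset.mem_image.1 ht
    exact ⟨trivial, hP i⟩
  · intro t ht t' ht' hne
    obtain ⟨i, -, rfl⟩ := Finset.mem_image.1 ht
    obtain ⟨j, -, rfl⟩ := Finset.mem_image.1 ht'
    have hij : i ≠ j := fun h => hne (by rw [h])
    simp only [BT.leaves]
    simp [Finset.disjoint_left, hij]
  · ext x
    simp [botForest, BT.leaves]

/-- The minimum of the poset of pointed Lyndon forests. -/
def botFP (n : ℕ) : FLynP n := ⟨botForest n, botForest_valid n _ fun _ => trivial⟩

/-- The minimum of the poset of bicolored Lyndon forests. -/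
def botFW (n : ℕ) : FLynW n := ⟨botForest n, botForest_valid n _ fun _ => trivial⟩

/-- The rank of a forest: its total number of internal vertices. -/
def rkForest (F : Finset BT) : ℕ := F.sum BT.internals

/-- The rank function of `FLyn_n^•`. -/
def rkFP {n : ℕ} (F : FLynP n) : ℕ := rkForest F.1

/-- The rank function of `FLyn_n^w`. -/
def rkFW {n : ℕ} (F : FLynW n) : ℕ := rkForest F.1

/-! ## The Whitney dual construction `R_λ(P)` -/

section RPoset

variable {α : Type*} {L : Type*}

/-- Swap the leftmost ascent of a word of labels. -/
noncomputable def swapFirstAscent (lt : L → L → Prop) : List L → List L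
  | a :: b :: rest => if lt a b then b :: a :: rest else a :: swapFirstAscent lt (b :: rest)
  | w => w

/-- Sort a word of labels by repeatedly swapping its leftmost ascent until it is
ascent-free. -/
noncomputable def sortWord (lt : L → L → Prop) (w : List L) : List L :=
  (swapFirstAscent lt)^[w.length * w.length] w

/-- The underlying set of the Whitney dual `R_λ(P)`: pairs `(x, w)` where `w` is the label
word of an ascent-free saturated chain from `0̂` to `x`. -/
abbrev RPoset (cov : α → α → Prop) (lab : α → α → L) (lt : L → L → Prop) (bot : α) : Type _ :=
  {q : α × List L //
    ∃ c, IsSatChain cov bot q.1 c ∧ AscFree lt (wordOf lab c) ∧ wordOf lab c = q.2}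

/-- The cover relation of `R_λ(P)`: `(x, w) ⋖ (y, u)` iff `x ⋖ y` and `u` is obtained by
sorting the label of `x ⋖ y` into `w`. -/
def covR (cov : α → α → Prop) (lab : α → α → L) (lt : L → L → Prop) (bot : α)
    (p q : RPoset cov lab lt bot) : Prop :=
  cov p.1.1 q.1.1 ∧ q.1.2 = sortWord lt (p.1.2 ++ [lab p.1.1 q.1.1])

end RPoset

/-! ## Reiner's poset of rooted spanning forests -/

/-- A rooted spanning forest on `[n]`, encoded by its parent function: `f i` is the parent
of the vertex `i` (`f i = i` for roots), vertices outside `[n]` being fixed, and every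
vertex reaching a root after finitely many steps (acyclicity). -/
def SFvalid (n : ℕ) (f : ℕ → ℕ) : Prop :=
  (∀ i ∈ Finset.Icc 1 n, f i ∈ Finset.Icc 1 n) ∧
  (∀ i, i ∉ Finset.Icc 1 n → f i = i) ∧
  (∀ i, ∃ k, f^[k + 1] i = f^[k] i)

/-- Reiner's poset `SF_n` of rooted spanning forests of the complete graph on `[n]`. -/
abbrev SF (n : ℕ) : Type := {f : ℕ → ℕ // SFvalid n f}

/-- The cover relation of `SF_n`: add an edge between the roots of two trees, one of the
two roots becoming the root of the merged tree. -/
def covSF {n : ℕ} (f g : SF n) : Prop :=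
  ∃ r1 ∈ Finset.Icc 1 n, ∃ r2 ∈ Finset.Icc 1 n, r1 ≠ r2 ∧
    f.1 r1 = r1 ∧ f.1 r2 = r2 ∧
    (g.1 = Function.update f.1 r1 r2 ∨ g.1 = Function.update f.1 r2 r1)

/-- The rank of a rooted spanning forest: its number of edges. -/
def rkSF {n : ℕ} (f : SF n) : ℕ := ((Finset.Icc 1 n).filter fun i => f.1 i ≠ i).card
/-! ## Further constructions used in particular statements -/

/-- The map `Φ` on underlying finsets: a pointed block `(B, q)` of a pointed partition
above `α` is sent to the set of minima of the `α`-blocks contained in `B`, pointed at the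
minimum of the `α`-block containing `q`. -/
noncomputable def PhiMap (af : Finset (Finset ℕ × ℕ)) (pf : Finset (Finset ℕ × ℕ)) :
    Finset (Finset ℕ × ℕ) :=
  pf.image fun b =>
    ((af.filter fun c => c.1 ⊆ b.1).image fun c => minB c.1,
     ((af.filter fun c => b.2 ∈ c.1).image fun c => minB c.1).min.untopD 0)

/-- The expected word of labels of the unique increasing maximal chain of the interval
`[0̂, [n]^p]` of the pointed partition poset:
`(1,2)¹ ⋯ (1,n)¹` if `p = 1`, and `(1,p)⁰ (1,2)¹ ⋯ (1,p-1)¹ (1,p+1)¹ ⋯ (1,n)¹` otherwise. -/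
def expectedWordP (n p : ℕ) : List (ℕ × ℕ × Bool) :=
  let base := (List.range (n - 1)).map fun i => ((1 : ℕ), i + 2, true)
  if p = 1 then base else ((1 : ℕ), p, false) :: base.erase (1, p, true)

/-- Merge two words of labels, each with non-increasing first components, into a single
word with non-increasing first components. -/
def mergeByNu : List (ℕ × ℕ × Bool) → List (ℕ × ℕ × Bool) → List (ℕ × ℕ × Bool)
  | [], ys => ys
  | xs, [] => xs
  | x :: xs, y :: ys =>
      if y.1 ≤ x.1 then x :: mergeByNu xs (y :: ys) else y :: mergeByNu (x :: xs) ys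
termination_by xs ys => xs.length + ys.length

/-- The word of labels of a tree read along the reverse-minimal linear extension of its
internal vertices: the internal vertex `v` contributes `(ν (L v), ν (R v), color v)`, the
vertices being listed with non-increasing valencies (descendants first among equal
valencies). -/
def BT.rmword : BT → List (ℕ × ℕ × Bool)
  | BT.leaf _ => []
  | BT.node c l r => mergeByNu l.rmword r.rmword ++ [(l.nu, r.nu, c)]

/-- The word of labels of the saturated chain `c(F)` associated to a forest `F`, read along
the reverse-minimal linear extension of the internal vertices of `F`. -/
noncomputable def forestWord (F : Finset BT) : List (ℕ × ℕ × Bool) :=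
  (F.toList.map BT.rmword).foldr mergeByNu []

/-- `TLyn_{n,p}^•`: pointed Lyndon trees on `[n]` whose associated chain ends at `[n]^p`,
i.e. whose tracked pointed element is `p`. -/
abbrev TLynBullet (n p : ℕ) : Type :=
  {T : BT // T.normalized ∧ T.pLyn ∧ T.leaves = Finset.Icc 1 n ∧ T.ppt = p}

/-- The labeling `λ̃` of `Πₙ•` proposed by Bellier-Millès, Delcroix-Oger and Hoffbeck:
the cover `u`-merging blocks with minima `a < b` in a pointed partition `π` with `|π|`
blocks is labeled `(b, a + n - |π|)` if `u = 0` and `(b, b + n - |π|)` if `u = 1`. -/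
noncomputable def labT (n : ℕ) {A : Finset ℕ} (π π' : PPart A) : ℕ × ℕ :=
  let olds := π.1 \ π'.1
  let mins := olds.image fun b => minB b.1
  let a := mins.min.untopD 0
  let b := mins.max.unbotD 0
  if ∃ c ∈ olds, minB c.1 = a ∧ ∃ d ∈ π'.1 \ π.1, d.2 = c.2
  then (b, b + n - π.1.card)
  else (b, a + n - π.1.card)

/-- The (strict) lexicographic order on `ℕ × ℕ`. -/
def ltT (x y : ℕ × ℕ) : Prop := x.1 < y.1 ∨ (x.1 = y.1 ∧ x.2 < y.2)

/-!
A cover of `π` is determined by its label `(a, b)ᵘ`: since the blocks of `π` are disjoint,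
`a` and `b` are the minima of exactly one block each, which are therefore the two merged
blocks, and `u` says which of their pointed elements the merged block keeps. Hence a chain
with a prescribed first element is recovered step by step from its word of labels.
-/

theorem chain_eq_of_wordOf_eq {α L : Type*} {cov : α → α → Prop} {lab : α → α → L}
    (hdet : ∀ x y z, cov x y → cov x z → lab x y = lab x z → y = z) :
    ∀ {c c' : List α}, c.head? = c'.head? → c.IsChain cov → c'.IsChain cov →
      wordOf lab c = wordOf lab c' → c = c'
  | [], [], _, _, _, _ => rfl
  | [_], [_], hhead, _, _, _ => by simpa using hhead
  | x :: y :: c, x' :: y' :: c', hhead, hc, hc', hw => by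
    obtain rfl : x = x' := by simpa using hhead
    simp only [List.isChain_cons_cons, wordOf, List.cons.injEq] at hc hc' hw
    obtain rfl := hdet x y y' hc.1 hc'.1 hw.1
    rw [chain_eq_of_wordOf_eq hdet (c := y :: c) (c' := y :: c') rfl hc.2 hc'.2 hw.2]
  | [], _ :: _, hhead, _, _, _ | _ :: _, [], hhead, _, _, _ => by simp at hhead
  | [_], _ :: _ :: _, _, _, _, hw | _ :: _ :: _, [_], _, _, _, hw => by simp [wordOf] at hw

lemma minB_mem {B : Finset ℕ} (h : B.Nonempty) : minB B ∈ B := by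
  rw [minB, ← Finset.coe_min' h, WithTop.untopD_coe]
  exact Finset.min'_mem B h

lemma Finset.sdiff_insert_erase_erase {β : Type*} [DecidableEq β] {s : Finset β} {a b m : β}
    (ha : a ∈ s) (hb : b ∈ s) (hm : m ∉ s) :
    s \ insert m ((s.erase a).erase b) = {a, b} := by
  ext x
  simp only [Finset.mem_sdiff, Finset.mem_insert, Finset.mem_erase, Finset.mem_singleton]
  grind

lemma Finset.insert_erase_erase_sdiff {β : Type*} [DecidableEq β] {s : Finset β} {a b m : β}
    (hm : m ∉ s) : insert m ((s.erase a).erase b) \ s = {m} := by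
  ext x
  simp only [Finset.mem_sdiff, Finset.mem_insert, Finset.mem_erase, Finset.mem_singleton]
  grind

namespace PPart

variable {A : Finset ℕ}

lemma eq_of_minB_eq (π : PPart A) {b b' : Finset ℕ × ℕ} (hb : b ∈ π.1) (hb' : b' ∈ π.1)
    (h : minB b.1 = minB b'.1) : b = b' := by
  by_contra hne
  have hmem : minB b.1 ∈ b.1 := minB_mem ⟨b.2, π.2.1 b hb⟩
  have hmem' : minB b'.1 ∈ b'.1 := minB_mem ⟨b'.2, π.2.1 b' hb'⟩
  exact Finset.disjoint_left.1 (π.2.2.1 b hb b' hb' hne) hmem (h ▸ hmem')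

lemma union_notMem (π : PPart A) {b1 b2 : Finset ℕ × ℕ} (hb1 : b1 ∈ π.1) (hb2 : b2 ∈ π.1)
    (hne : b1 ≠ b2) (p : ℕ) : (b1.1 ∪ b2.1, p) ∉ π.1 := by
  intro hm
  have h1 : b1.2 ∈ b1.1 := π.2.1 b1 hb1
  have h2 : b2.2 ∈ b2.1 := π.2.1 b2 hb2
  by_cases heq : (b1.1 ∪ b2.1, p) = b1
  · have : b2.2 ∈ b1.1 := heq ▸ Finset.mem_union_right _ h2
    exact Finset.disjoint_left.1 (π.2.2.1 b1 hb1 b2 hb2 hne) this h2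
  · exact Finset.disjoint_left.1 (π.2.2.1 _ hm b1 hb1 heq) (Finset.mem_union_left _ h1) h1

lemma labPP_of_merge {π π' : PPart A} {b1 b2 : Finset ℕ × ℕ} {p : ℕ}
    (hb1 : b1 ∈ π.1) (hb2 : b2 ∈ π.1) (hlt : minB b1.1 < minB b2.1)
    (hπ' : π'.1 = insert (b1.1 ∪ b2.1, p) ((π.1.erase b1).erase b2)) :
    labPP π π' = (minB b1.1, minB b2.1, decide (p = b1.2)) := by
  have hne : b1 ≠ b2 := fun h => hlt.ne (congrArg (minB ·.1) h)
  have hm := π.union_notMem hb1 hb2 hne p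
  have hold : π.1 \ π'.1 = {b1, b2} := hπ' ▸ Finset.sdiff_insert_erase_erase hb1 hb2 hm
  have hnew : π'.1 \ π.1 = {(b1.1 ∪ b2.1, p)} := hπ' ▸ Finset.insert_erase_erase_sdiff hm
  have hmin : ({minB b1.1, minB b2.1} : Finset ℕ).min.untopD 0 = minB b1.1 := by
    rw [Finset.min_insert, Finset.min_singleton, ← WithTop.coe_min, WithTop.untopD_coe,
      min_eq_left hlt.le]
  have hmax : ({minB b1.1, minB b2.1} : Finset ℕ).max.unbotD 0 = minB b2.1 := by
    rw [Finset.max_insert, Finset.max_singleton, ← WithBot.coe_max, WithBot.unbotD_coe,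
      max_eq_right hlt.le]
  simp only [labPP, hold, hnew, Finset.image_insert, Finset.image_singleton, hmin, hmax]
  simp [hlt.ne']

lemma eq_of_covPP_of_labPP_eq {π π' π'' : PPart A} (h' : covPP π π') (h'' : covPP π π'')
    (hlab : labPP π π' = labPP π π'') : π' = π'' := by
  obtain ⟨b1, hb1, b2, hb2, hlt, p, hp, hπ'⟩ := h'
  obtain ⟨c1, hc1, c2, hc2, hlt', q, hq, hπ''⟩ := h''
  rw [labPP_of_merge hb1 hb2 hlt hπ', labPP_of_merge hc1 hc2 hlt' hπ''] at hlab
  simp only [Prod.mk.injEq, decide_eq_decide] at hlab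
  obtain ⟨hmin1, hmin2, hpoint⟩ := hlab
  obtain rfl := π.eq_of_minB_eq hb1 hc1 hmin1
  obtain rfl := π.eq_of_minB_eq hb2 hc2 hmin2
  obtain rfl : p = q := by grind
  exact Subtype.ext (hπ'.trans hπ''.symm)

end PPart

/-- The labeling `λ•` is injective on maximal chains of every interval of
`Πₙ•`: a saturated chain starting at a given pointed partition is uniquely determined by
its word of `λ•`-labels; in particular, within any interval, distinct maximal chains have
distinct label words. -/
theorem pointed_labeling_injective_on_chains (n : ℕ) :
    (∀ (p0 : PPart (Finset.Icc 1 n)) (c c' : List (PPart (Finset.Icc 1 n))),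
        c.head? = some p0 → c'.head? = some p0 →
        c.Chain' covPP → c'.Chain' covPP →
        wordOf labPP c = wordOf labPP c' → c = c') ∧
    (∀ (x y : PPart (Finset.Icc 1 n)) (c c' : List (PPart (Finset.Icc 1 n))),
        IsSatChain covPP x y c → IsSatChain covPP x y c' →
        wordOf labPP c = wordOf labPP c' → c = c') := by
  have hdet : ∀ π π' π'' : PPart (Finset.Icc 1 n),
      covPP π π' → covPP π π'' → labPP π π' = labPP π π'' → π' = π'' :=
    fun _ _ _ => PPart.eq_of_covPP_of_labPP_eq
  exact ⟨fun _ _ _ hc hc' => chain_eq_of_wordOf_eq hdet (hc.trans hc'.symm),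
    fun _ _ _ _ hc hc' => chain_eq_of_wordOf_eq hdet (hc.2.1.trans hc'.2.1.symm) hc.1 hc'.1⟩
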